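/- Let c, d, e be polynomial comonoids, (s, φ) a (c,d)-effects handler and (t, ψ) a (d,e)-effects handler. Then the composite t ◁ e → t ◁ e ◁ e → d ◁ t ◁ e, given by (ψ ◁ e) ∘ (t ◁ δ_e), equalizes the two maps d ◁ t ◁ e ⇉ d ◁ d ◁ t ◁ e given by δ_d ◁ t ◁ e and (d ◁ ψ ◁ e) ∘ (d ◁ t ◁ δ_e); consequently there is an induced map s ◁ t ◁ e → (s ◁ d) ◁_d (t ◁ e) into the composite bicomodule. -/
import Mathlib



/-- A polynomial functor, given by a set of positions and, for each position, a set of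
directions. -/
structure PolyF where
  pos : Type
  dir : pos → Type

/-- A morphism of polynomial functors (natural transformation), in positions/directions form. -/
structure PolyFHom (p q : PolyF) where
  onPos : p.pos → q.pos
  onDir : ∀ a, q.dir (onPos a) → p.dir a

def PolyFHom.id (p : PolyF) : PolyFHom p p := ⟨fun a => a, fun _ d => d⟩

/-- Diagrammatic composition of morphisms of polynomials. -/
def PolyFHom.comp {p q r : PolyF} (f : PolyFHom p q) (g : PolyFHom q r) : PolyFHom p r :=
  ⟨fun a => g.onPos (f.onPos a), fun a d => f.onDir a (g.onDir (f.onPos a) d)⟩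

/-- The identity polynomial `y`. -/
def yPoly : PolyF := ⟨PUnit, fun _ => PUnit⟩

/-- The linear polynomial `S·y`. -/
def lin (S : Type) : PolyF := ⟨S, fun _ => PUnit⟩

/-- The representable polynomial `y^T`. -/
def rep (T : Type) : PolyF := ⟨PUnit, fun _ => T⟩

/-- The composition product `p ◁ q` of polynomials. -/
def polyComp (p q : PolyF) : PolyF :=
  ⟨Σ a : p.pos, p.dir a → q.pos, fun x => Σ i : p.dir x.1, q.dir (x.2 i)⟩

/-- The Dirichlet tensor product `p ⊗ q`. -/
def tens (p q : PolyF) : PolyF :=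
  ⟨p.pos × q.pos, fun x => p.dir x.1 × q.dir x.2⟩

/-- Horizontal composition `f ◁ g` of polynomial morphisms. -/
def hcomp {p p' q q' : PolyF} (f : PolyFHom p p') (g : PolyFHom q q') :
    PolyFHom (polyComp p q) (polyComp p' q') :=
  ⟨fun x => ⟨f.onPos x.1, fun i => g.onPos (x.2 (f.onDir x.1 i))⟩,
   fun x d => ⟨f.onDir x.1 d.1, g.onDir _ d.2⟩⟩

/-- The associator `(p ◁ q) ◁ r → p ◁ (q ◁ r)`. -/
def assocHom (p q r : PolyF) : PolyFHom (polyComp (polyComp p q) r) (polyComp p (polyComp q r)) :=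
  ⟨fun x => ⟨x.1.1, fun i => ⟨x.1.2 i, fun j => x.2 ⟨i, j⟩⟩⟩,
   fun x d => ⟨⟨d.1, d.2.1⟩, d.2.2⟩⟩

/-- The inverse associator `p ◁ (q ◁ r) → (p ◁ q) ◁ r`. -/
def assocInv (p q r : PolyF) : PolyFHom (polyComp p (polyComp q r)) (polyComp (polyComp p q) r) :=
  ⟨fun x => ⟨⟨x.1, fun i => (x.2 i).1⟩, fun ij => (x.2 ij.1).2 ij.2⟩,
   fun x d => ⟨d.1.1, d.1.2, d.2⟩⟩

/-- Left unitor `y ◁ p → p`. -/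
def lunitor (p : PolyF) : PolyFHom (polyComp yPoly p) p :=
  ⟨fun x => x.2 PUnit.unit, fun _ d => ⟨PUnit.unit, d⟩⟩

/-- Right unitor `p ◁ y → p`. -/
def runitor (p : PolyF) : PolyFHom (polyComp p yPoly) p :=
  ⟨fun x => x.1, fun _ d => ⟨d, PUnit.unit⟩⟩

/-- Inverse left unitor `p → y ◁ p`. -/
def lunitorInv (p : PolyF) : PolyFHom p (polyComp yPoly p) :=
  ⟨fun a => ⟨PUnit.unit, fun _ => a⟩, fun _ d => d.2⟩

/-- Inverse right unitor `p → p ◁ y`. -/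
def runitorInv (p : PolyF) : PolyFHom p (polyComp p yPoly) :=
  ⟨fun a => ⟨a, fun _ => PUnit.unit⟩, fun _ d => d.1⟩

/-- A comonoid structure on a polynomial with respect to `(y, ◁)`. -/
structure ComonoidStruct (c : PolyF) where
  counit : PolyFHom c yPoly
  comul : PolyFHom c (polyComp c c)
  counit_left : comul.comp ((hcomp counit (PolyFHom.id c)).comp (lunitor c)) = PolyFHom.id c
  counit_right : comul.comp ((hcomp (PolyFHom.id c) counit).comp (runitor c)) = PolyFHom.id c
  coassoc : comul.comp (hcomp (PolyFHom.id c) comul)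
    = comul.comp ((hcomp comul (PolyFHom.id c)).comp (assocHom c c c))

/-- `f` is a comonoid homomorphism. -/
def IsComonHom {c d : PolyF} (mc : ComonoidStruct c) (md : ComonoidStruct d)
    (f : PolyFHom c d) : Prop :=
  f.comp md.counit = mc.counit ∧ f.comp md.comul = mc.comul.comp (hcomp f f)

/-- A `(c,d)`-bicomodule. -/
structure Bicomod (c d : PolyF) (mc : ComonoidStruct c) (md : ComonoidStruct d) where
  carrier : PolyF
  coactL : PolyFHom carrier (polyComp c carrier)
  coactR : PolyFHom carrier (polyComp carrier d)
  counitL : coactL.comp ((hcomp mc.counit (PolyFHom.id carrier)).comp (lunitor carrier))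
    = PolyFHom.id carrier
  coassocL : coactL.comp (hcomp (PolyFHom.id c) coactL)
    = coactL.comp ((hcomp mc.comul (PolyFHom.id carrier)).comp (assocHom c c carrier))
  counitR : coactR.comp ((hcomp (PolyFHom.id carrier) md.counit).comp (runitor carrier))
    = PolyFHom.id carrier
  coassocR : coactR.comp (hcomp (PolyFHom.id carrier) md.comul)
    = coactR.comp ((hcomp coactR (PolyFHom.id d)).comp (assocHom carrier d d))
  compat : coactL.comp (hcomp (PolyFHom.id c) coactR)
    = coactR.comp ((hcomp coactL (PolyFHom.id d)).comp (assocHom c carrier d))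

/-- A morphism of `(c,d)`-bicomodules. -/
structure BicomodHom {c d : PolyF} {mc : ComonoidStruct c} {md : ComonoidStruct d}
    (P Q : Bicomod c d mc md) where
  val : PolyFHom P.carrier Q.carrier
  commL : P.coactL.comp (hcomp (PolyFHom.id c) val) = val.comp Q.coactL
  commR : P.coactR.comp (hcomp val (PolyFHom.id d)) = val.comp Q.coactR

/-- A witness that the bicomodule `B` is the composite `P ◁_d Q`, i.e. the equalizer of the
two canonical maps `P ◁ Q ⇉ P ◁ d ◁ Q`, compatibly with the coactions. -/
structure CompositeWitness {c d e : PolyF} {mc : ComonoidStruct c} {md : ComonoidStruct d}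
    {me : ComonoidStruct e} (P : Bicomod c d mc md) (Q : Bicomod d e md me)
    (B : Bicomod c e mc me) where
  incl : PolyFHom B.carrier (polyComp P.carrier Q.carrier)
  equalizes : incl.comp ((hcomp P.coactR (PolyFHom.id Q.carrier)).comp
      (assocHom P.carrier d Q.carrier))
    = incl.comp (hcomp (PolyFHom.id P.carrier) Q.coactL)
  lift : ∀ (X : PolyF) (h : PolyFHom X (polyComp P.carrier Q.carrier)),
    h.comp ((hcomp P.coactR (PolyFHom.id Q.carrier)).comp (assocHom P.carrier d Q.carrier))
      = h.comp (hcomp (PolyFHom.id P.carrier) Q.coactL) →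
    ∃! l : PolyFHom X B.carrier, l.comp incl = h
  compatL : B.coactL.comp (hcomp (PolyFHom.id c) incl)
    = incl.comp ((hcomp P.coactL (PolyFHom.id Q.carrier)).comp (assocHom c P.carrier Q.carrier))
  compatR : B.coactR.comp (hcomp incl (PolyFHom.id e))
    = incl.comp ((hcomp (PolyFHom.id P.carrier) Q.coactR).comp (assocInv P.carrier Q.carrier e))

/-- The identity bicomodule on a comonoid. -/
def idBicomod {c : PolyF} (mc : ComonoidStruct c) : Bicomod c c mc mc where
  carrier := c
  coactL := mc.comul
  coactR := mc.comul
  counitL := mc.counit_left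
  coassocL := mc.coassoc
  counitR := mc.counit_right
  coassocR := mc.coassoc
  compat := mc.coassoc

/-- A monad on `c` in the bicategory of polynomial comonoids and bicomodules. -/
structure MonadOn {c : PolyF} {mc : ComonoidStruct c} (m : Bicomod c c mc mc) where
  sq : Bicomod c c mc mc
  w : CompositeWitness m m sq
  unit : BicomodHom (idBicomod mc) m
  mul : BicomodHom sq m
  left_unit : ∀ L : PolyFHom m.carrier sq.carrier,
    L.comp w.incl = m.coactL.comp (hcomp unit.val (PolyFHom.id m.carrier)) →
    L.comp mul.val = PolyFHom.id m.carrier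
  right_unit : ∀ L : PolyFHom m.carrier sq.carrier,
    L.comp w.incl = m.coactR.comp (hcomp (PolyFHom.id m.carrier) unit.val) →
    L.comp mul.val = PolyFHom.id m.carrier
  cube : Bicomod c c mc mc
  wc : CompositeWitness sq m cube
  cube' : Bicomod c c mc mc
  wc' : CompositeWitness m sq cube'
  mul_assoc : ∀ (A : PolyFHom cube.carrier cube'.carrier)
      (L1 : PolyFHom cube.carrier sq.carrier) (L2 : PolyFHom cube'.carrier sq.carrier),
    A.comp (wc'.incl.comp (hcomp (PolyFHom.id m.carrier) w.incl))
      = wc.incl.comp ((hcomp w.incl (PolyFHom.id m.carrier)).comp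
          (assocHom m.carrier m.carrier m.carrier)) →
    L1.comp w.incl = wc.incl.comp (hcomp mul.val (PolyFHom.id m.carrier)) →
    L2.comp w.incl = wc'.incl.comp (hcomp (PolyFHom.id m.carrier) mul.val) →
    L1.comp mul.val = A.comp (L2.comp mul.val)

/-- A comonad on `d` in the bicategory of polynomial comonoids and bicomodules. -/
structure ComonadOn {d : PolyF} {md : ComonoidStruct d} (E : Bicomod d d md md) where
  sq : Bicomod d d md md
  w : CompositeWitness E E sq
  counit : BicomodHom E (idBicomod md)
  comul : BicomodHom E sq
  left_counit : comul.val.comp (w.incl.comp (hcomp counit.val (PolyFHom.id E.carrier)))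
    = E.coactL
  right_counit : comul.val.comp (w.incl.comp (hcomp (PolyFHom.id E.carrier) counit.val))
    = E.coactR
  coassoc : comul.val.comp (w.incl.comp ((hcomp comul.val (PolyFHom.id E.carrier)).comp
      ((hcomp w.incl (PolyFHom.id E.carrier)).comp
        (assocHom E.carrier E.carrier E.carrier))))
    = comul.val.comp (w.incl.comp ((hcomp (PolyFHom.id E.carrier) comul.val).comp
        (hcomp (PolyFHom.id E.carrier) w.incl)))

/-- A left module over a monad `m` in the bicategory of comonoids and bicomodules. -/
structure ModuleOn {c b : PolyF} {mc : ComonoidStruct c} {mb : ComonoidStruct b}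
    (m : Bicomod c c mc mc) (M : MonadOn m) (A : Bicomod c b mc mb) where
  mA : Bicomod c b mc mb
  w : CompositeWitness m A mA
  act : BicomodHom mA A
  unit_law : ∀ L : PolyFHom A.carrier mA.carrier,
    L.comp w.incl = A.coactL.comp (hcomp M.unit.val (PolyFHom.id A.carrier)) →
    L.comp act.val = PolyFHom.id A.carrier
  sqA : Bicomod c b mc mb
  wsq : CompositeWitness M.sq A sqA
  assoc_law : ∀ (L0 : PolyFHom sqA.carrier (polyComp m.carrier mA.carrier))
      (L1 L2 : PolyFHom sqA.carrier mA.carrier),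
    L0.comp (hcomp (PolyFHom.id m.carrier) w.incl)
      = wsq.incl.comp ((hcomp M.w.incl (PolyFHom.id A.carrier)).comp
          (assocHom m.carrier m.carrier A.carrier)) →
    L1.comp w.incl = wsq.incl.comp (hcomp M.mul.val (PolyFHom.id A.carrier)) →
    L2.comp w.incl = L0.comp (hcomp (PolyFHom.id m.carrier) act.val) →
    L1.comp act.val = L2.comp act.val

/-- A witness that `E` is the right coclosure `⟨p, q⟩`, i.e. that `− ◁_d q` applied to `E`
is couniversal among `(d,d)`-bicomodules receiving a map from `p`. -/
structure CoclosureWitness {d c : PolyF} {md : ComonoidStruct d} {mc : ComonoidStruct c}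
    (p q : Bicomod d c md mc) (E : Bicomod d d md md) where
  cw : ∀ r : Bicomod d d md md, (B : Bicomod d c md mc) × CompositeWitness r q B
  equiv : ∀ r : Bicomod d d md md, BicomodHom E r ≃ BicomodHom p (cw r).1
  natural : ∀ (r r' : Bicomod d d md md) (g : BicomodHom r r')
      (h : PolyFHom (cw r).1.carrier (cw r').1.carrier),
    h.comp (cw r').2.incl = (cw r).2.incl.comp (hcomp g.val (PolyFHom.id q.carrier)) →
    ∀ (f : BicomodHom E r) (fg : BicomodHom E r'), fg.val = f.val.comp g.val →
    ((equiv r') fg).val = ((equiv r) f).val.comp h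

-- tests

/-- Evaluation of a polynomial functor at a set. -/
def pEval (p : PolyF) (X : Type) : Type := Σ a : p.pos, p.dir a → X

/-- The internal hom `[q,p]` for the Dirichlet tensor product. -/
def ihom (q p : PolyF) : PolyF :=
  ⟨PolyFHom q p, fun φ => Σ I : q.pos, p.dir (φ.onPos I)⟩

/-- The canonical duoidal map `S·y ⊗ p → S·y ◁ p`. -/
def duoLin (S : Type) (p : PolyF) : PolyFHom (tens (lin S) p) (polyComp (lin S) p) :=
  ⟨fun x => ⟨x.1, fun _ => x.2⟩, fun _ d => (d.1, d.2)⟩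

/-- The canonical duoidal map `p ⊗ y^T → p ◁ y^T`. -/
def duoRep (p : PolyF) (T : Type) : PolyFHom (tens p (rep T)) (polyComp p (rep T)) :=
  ⟨fun x => ⟨x.1, fun _ => PUnit.unit⟩, fun _ d => (d.1, d.2)⟩

/-- A category structure with objects the positions of `c` and morphisms out of `C` the
directions `c.dir C`. -/
structure CatStruct (c : PolyF) where
  cod : ∀ {C : c.pos}, c.dir C → c.pos
  ident : ∀ C : c.pos, c.dir C
  compose : ∀ {C : c.pos} (f : c.dir C), c.dir (cod f) → c.dir C
  cod_ident : ∀ C : c.pos, cod (ident C) = C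
  cod_compose : ∀ {C : c.pos} (f : c.dir C) (g : c.dir (cod f)),
    cod (compose f g) = cod g
  compose_ident_right : ∀ {C : c.pos} (f : c.dir C), compose f (ident (cod f)) = f
  compose_ident_left : ∀ {C : c.pos} (g : c.dir C),
    compose (ident C) (cast (congrArg c.dir (cod_ident C)).symm g) = g
  compose_assoc : ∀ {C : c.pos} (f : c.dir C) (g : c.dir (cod f))
      (h : c.dir (cod (compose f g))),
    compose (compose f g) h = compose f (compose g (cast (congrArg c.dir (cod_compose f g)) h))

/-- Coproduct of polynomials. -/
def psum (p q : PolyF) : PolyF := ⟨Sum p.pos q.pos, Sum.elim p.dir q.dir⟩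

def sumMap {p p' q q' : PolyF} (f : PolyFHom p p') (g : PolyFHom q q') :
    PolyFHom (psum p q) (psum p' q') where
  onPos := Sum.map f.onPos g.onPos
  onDir := fun x => match x with
    | Sum.inl a => f.onDir a
    | Sum.inr b => g.onDir b

/-- The fold map `y + y → y`. -/
def foldY : PolyFHom (psum yPoly yPoly) yPoly where
  onPos := fun _ => PUnit.unit
  onDir := fun x => match x with
    | Sum.inl _ => fun u => u
    | Sum.inr _ => fun u => u

/-- The duoidal interchange `(p ◁ q) + (r ◁ s) → (p + r) ◁ (q + s)`. -/
def duoSum (p q r s : PolyF) :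
    PolyFHom (psum (polyComp p q) (polyComp r s)) (polyComp (psum p r) (psum q s)) where
  onPos := fun x => match x with
    | Sum.inl y => ⟨Sum.inl y.1, fun i => Sum.inl (y.2 i)⟩
    | Sum.inr y => ⟨Sum.inr y.1, fun i => Sum.inr (y.2 i)⟩
  onDir := fun x => match x with
    | Sum.inl _ => fun d => ⟨d.1, d.2⟩
    | Sum.inr _ => fun d => ⟨d.1, d.2⟩

def tensMap {p p' q q' : PolyF} (f : PolyFHom p p') (g : PolyFHom q q') :
    PolyFHom (tens p q) (tens p' q') :=
  ⟨fun x => (f.onPos x.1, g.onPos x.2), fun x d => (f.onDir x.1 d.1, g.onDir x.2 d.2)⟩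

/-- The isomorphism `y ⊗ y → y`. -/
def tensUnitY : PolyFHom (tens yPoly yPoly) yPoly :=
  ⟨fun _ => PUnit.unit, fun _ _ => (PUnit.unit, PUnit.unit)⟩

/-- The duoidal interchange `(p ◁ q) ⊗ (r ◁ s) → (p ⊗ r) ◁ (q ⊗ s)`. -/
def duoTens (p q r s : PolyF) :
    PolyFHom (tens (polyComp p q) (polyComp r s)) (polyComp (tens p r) (tens q s)) :=
  ⟨fun x => ⟨(x.1.1, x.2.1), fun ij => (x.1.2 ij.1, x.2.2 ij.2)⟩,
   fun _ d => (⟨d.1.1, d.2.1⟩, ⟨d.1.2, d.2.2⟩)⟩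

/-- Binary product of polynomials. -/
def pprod (p q : PolyF) : PolyF := ⟨p.pos × q.pos, fun x => Sum (p.dir x.1) (q.dir x.2)⟩

def prodMap {p p' q q' : PolyF} (f : PolyFHom p p') (g : PolyFHom q q') :
    PolyFHom (pprod p q) (pprod p' q') :=
  ⟨fun x => (f.onPos x.1, g.onPos x.2),
   fun x d => Sum.elim (fun a => Sum.inl (f.onDir x.1 a)) (fun b => Sum.inr (g.onDir x.2 b)) d⟩

/-- The tower `p⁽⁰⁾ = y`, `p⁽ⁿ⁺¹⁾ = y × (p ◁ p⁽ⁿ⁾)`. -/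
def iter (p : PolyF) : ℕ → PolyF
  | 0 => yPoly
  | n+1 => pprod yPoly (polyComp p (iter p n))

/-- The projections `p⁽ⁿ⁺¹⁾ → p⁽ⁿ⁾`. -/
def projIter (p : PolyF) : ∀ n : ℕ, PolyFHom (iter p (n+1)) (iter p n)
  | 0 => ⟨fun _ => PUnit.unit, fun _ _ => Sum.inl PUnit.unit⟩
  | n+1 => prodMap (PolyFHom.id yPoly) (hcomp (PolyFHom.id p) (projIter p n))

/-- The carrier of the cofree comonoid on `p`: the limit of the tower `p⁽ⁿ⁾`,
with directions the colimit of the direction sets along the tower. -/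
def cofreeP (p : PolyF) : PolyF where
  pos := {f : ∀ n : ℕ, (iter p n).pos // ∀ n : ℕ, (projIter p n).onPos (f (n+1)) = f n}
  dir := fun f => Quot (fun x y : Σ n : ℕ, (iter p n).dir (f.1 n) =>
    y = ⟨x.1 + 1, (projIter p x.1).onDir (f.1 (x.1+1))
      (cast (congrArg (iter p x.1).dir (f.2 x.1).symm) x.2)⟩)

/-- The projection `c⁀p → y` onto `p⁽⁰⁾`. -/
def projZero (p : PolyF) : PolyFHom (cofreeP p) yPoly :=
  ⟨fun _ => PUnit.unit, fun f _ => Quot.mk _ ⟨0, PUnit.unit⟩⟩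

/-- The projection `c⁀p → p`, via `p⁽¹⁾ = y × (p ◁ y) → p`. -/
def projP (p : PolyF) : PolyFHom (cofreeP p) p :=
  ⟨fun f => ((f.1 1).2).1, fun f d => Quot.mk _ ⟨1, Sum.inr ⟨d, PUnit.unit⟩⟩⟩

/-- The effects-handler axioms for `φ : s ◁ d → c ◁ s`. -/
def IsHandler {c d : PolyF} (mc : ComonoidStruct c) (md : ComonoidStruct d) (s : PolyF)
    (φ : PolyFHom (polyComp s d) (polyComp c s)) : Prop :=
  φ.comp ((hcomp mc.counit (PolyFHom.id s)).comp (lunitor s))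
    = (hcomp (PolyFHom.id s) md.counit).comp (runitor s)
  ∧ (hcomp (PolyFHom.id s) md.comul).comp ((assocInv s d d).comp
      ((hcomp φ (PolyFHom.id d)).comp ((assocHom c s d).comp (hcomp (PolyFHom.id c) φ))))
    = φ.comp ((hcomp mc.comul (PolyFHom.id s)).comp (assocHom c c s))

/-- The left coaction `s ◁ d → c ◁ (s ◁ d)` induced by an effects handler `φ`. -/
def handlerCoactL {c d : PolyF} (md : ComonoidStruct d) (s : PolyF)
    (φ : PolyFHom (polyComp s d) (polyComp c s)) :
    PolyFHom (polyComp s d) (polyComp c (polyComp s d)) :=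
  (hcomp (PolyFHom.id s) md.comul).comp ((assocInv s d d).comp
    ((hcomp φ (PolyFHom.id d)).comp (assocHom c s d)))

/-- The right coaction `s ◁ d → (s ◁ d) ◁ d` induced by comultiplication. -/
def handlerCoactR {d : PolyF} (md : ComonoidStruct d) (s : PolyF) :
    PolyFHom (polyComp s d) (polyComp (polyComp s d) d) :=
  (hcomp (PolyFHom.id s) md.comul).comp (assocInv s d d)

/-- A witness that `B` is the equalizer of the two canonical maps `p ◁ q ⇉ p ◁ dm ◁ q`
determined by a right coaction on `p` and a left coaction on `q`. -/
structure EqualizerWitness {p dm q : PolyF} (ρ : PolyFHom p (polyComp p dm))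
    (lam : PolyFHom q (polyComp dm q)) (B : PolyF) where
  incl : PolyFHom B (polyComp p q)
  equalizes : incl.comp ((hcomp ρ (PolyFHom.id q)).comp (assocHom p dm q))
    = incl.comp (hcomp (PolyFHom.id p) lam)
  lift : ∀ (X : PolyF) (h : PolyFHom X (polyComp p q)),
    h.comp ((hcomp ρ (PolyFHom.id q)).comp (assocHom p dm q))
      = h.comp (hcomp (PolyFHom.id p) lam) →
    ∃! l : PolyFHom X B, l.comp incl = h

/-- The discrete comonoid (discrete category) on a set `A`. -/
def discreteComon (A : Type) : ComonoidStruct (lin A) where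
  counit := ⟨fun _ => PUnit.unit, fun _ _ => PUnit.unit⟩
  comul := ⟨fun a => ⟨a, fun _ => a⟩, fun _ _ => PUnit.unit⟩
  counit_left := rfl
  counit_right := rfl
  coassoc := rfl

/-- The bicomodule between discrete comonoids given by a span
`A ← (total space of P) → P.pos → A`. -/
def spanBicomod (A : Type) (P : PolyF) (f : P.pos → A) (g : ∀ x, P.dir x → A) :
    Bicomod (lin A) (lin A) (discreteComon A) (discreteComon A) where
  carrier := P
  coactL := ⟨fun x => ⟨f x, fun _ => x⟩, fun _ d => d.2⟩
  coactR := ⟨fun x => ⟨x, fun i => g x i⟩, fun _ d => d.1⟩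
  counitL := rfl
  coassocL := rfl
  counitR := rfl
  coassocR := rfl
  compat := rfl


/-- For comonoids `c, d, e`, a `(c,d)`-effects handler `(s,φ)` and a
`(d,e)`-effects handler `(t,ψ)`, the composite `t ◁ e → t ◁ e ◁ e → d ◁ t ◁ e` (using
`ψ`) equalizes the two maps `d ◁ t ◁ e ⇉ d ◁ d ◁ t ◁ e` given by `δ_d ◁ t ◁ e` and
`(d ◁ ψ ◁ e) ∘ (d ◁ t ◁ δ_e)`; consequently there is an induced map
`s ◁ t ◁ e → (s ◁ d) ◁_d (t ◁ e)` into the composite bicomodule. -/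
theorem handler_composition {c d e : PolyF} (mc : ComonoidStruct c)
    (md : ComonoidStruct d) (me : ComonoidStruct e) (s t : PolyF)
    (φ : PolyFHom (polyComp s d) (polyComp c s))
    (ψ : PolyFHom (polyComp t e) (polyComp d t))
    (hφ : IsHandler mc md s φ) (hψ : IsHandler md me t ψ) :
    ((handlerCoactL me t ψ).comp
        ((hcomp md.comul (PolyFHom.id (polyComp t e))).comp (assocHom d d (polyComp t e)))
      = (handlerCoactL me t ψ).comp (hcomp (PolyFHom.id d) (handlerCoactL me t ψ))) ∧
    (∀ (B : PolyF)
      (W : EqualizerWitness (handlerCoactR md s) (handlerCoactL me t ψ) B),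
      ∃ h : PolyFHom (polyComp s (polyComp t e)) B,
        h.comp W.incl
          = (hcomp (PolyFHom.id s) (handlerCoactL me t ψ)).comp
              (assocInv s d (polyComp t e))) := by

  -- abbreviations
  have coassoc1 :
      (handlerCoactL me t ψ).comp
        ((hcomp md.comul (PolyFHom.id (polyComp t e))).comp (assocHom d d (polyComp t e)))
      = (handlerCoactL me t ψ).comp (hcomp (PolyFHom.id d) (handlerCoactL me t ψ)) := by
    have r1 : PolyFHom (polyComp (polyComp d (polyComp d t)) e)
        (polyComp d (polyComp d (polyComp t e))) :=
      (assocHom d (polyComp d t) e).comp (hcomp (PolyFHom.id d) (assocHom d t e))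
    -- the common tail after all comultiplications of e
    have calcA :
        (handlerCoactL me t ψ).comp
          ((hcomp md.comul (PolyFHom.id (polyComp t e))).comp (assocHom d d (polyComp t e)))
        = (hcomp (PolyFHom.id t) me.comul).comp ((assocInv t e e).comp
            ((hcomp (ψ.comp ((hcomp md.comul (PolyFHom.id t)).comp (assocHom d d t)))
              (PolyFHom.id e)).comp
              ((assocHom d (polyComp d t) e).comp
                (hcomp (PolyFHom.id d) (assocHom d t e))))) := rfl
    have calcB :
        (hcomp (PolyFHom.id t) me.comul).comp ((assocInv t e e).comp
            ((hcomp ((hcomp (PolyFHom.id t) me.comul).comp ((assocInv t e e).comp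
                ((hcomp ψ (PolyFHom.id e)).comp ((assocHom d t e).comp
                  (hcomp (PolyFHom.id d) ψ)))))
              (PolyFHom.id e)).comp
              ((assocHom d (polyComp d t) e).comp
                (hcomp (PolyFHom.id d) (assocHom d t e)))))
        = (hcomp (PolyFHom.id t)
            (me.comul.comp ((hcomp me.comul (PolyFHom.id e)).comp (assocHom e e e)))).comp
            ((assocInv t e (polyComp e e)).comp
              ((hcomp ψ (PolyFHom.id (polyComp e e))).comp
                ((assocHom d t (polyComp e e)).comp
                  (hcomp (PolyFHom.id d)
                    ((assocInv t e e).comp ((hcomp ψ (PolyFHom.id e)).comp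
                      (assocHom d t e))))))) := rfl
    have calcC :
        (hcomp (PolyFHom.id t)
            (me.comul.comp (hcomp (PolyFHom.id e) me.comul))).comp
            ((assocInv t e (polyComp e e)).comp
              ((hcomp ψ (PolyFHom.id (polyComp e e))).comp
                ((assocHom d t (polyComp e e)).comp
                  (hcomp (PolyFHom.id d)
                    ((assocInv t e e).comp ((hcomp ψ (PolyFHom.id e)).comp
                      (assocHom d t e)))))))
        = (handlerCoactL me t ψ).comp (hcomp (PolyFHom.id d) (handlerCoactL me t ψ)) := rfl
    rw [calcA, ← hψ.2, calcB, ← me.coassoc, calcC]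
  refine ⟨coassoc1, fun B W => ?_⟩
  have hk :
      ((hcomp (PolyFHom.id s) (handlerCoactL me t ψ)).comp
          (assocInv s d (polyComp t e))).comp
        ((hcomp (handlerCoactR md s) (PolyFHom.id (polyComp t e))).comp
          (assocHom (polyComp s d) d (polyComp t e)))
      = ((hcomp (PolyFHom.id s) (handlerCoactL me t ψ)).comp
          (assocInv s d (polyComp t e))).comp
        (hcomp (PolyFHom.id (polyComp s d)) (handlerCoactL me t ψ)) := by
    have e1 :
        ((hcomp (PolyFHom.id s) (handlerCoactL me t ψ)).comp
            (assocInv s d (polyComp t e))).comp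
          ((hcomp (handlerCoactR md s) (PolyFHom.id (polyComp t e))).comp
            (assocHom (polyComp s d) d (polyComp t e)))
        = (hcomp (PolyFHom.id s)
            ((handlerCoactL me t ψ).comp
              ((hcomp md.comul (PolyFHom.id (polyComp t e))).comp
                (assocHom d d (polyComp t e))))).comp
            (assocInv s d (polyComp d (polyComp t e))) := rfl
    have e2 :
        ((hcomp (PolyFHom.id s) (handlerCoactL me t ψ)).comp
            (assocInv s d (polyComp t e))).comp
          (hcomp (PolyFHom.id (polyComp s d)) (handlerCoactL me t ψ))
        = (hcomp (PolyFHom.id s)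
            ((handlerCoactL me t ψ).comp
              (hcomp (PolyFHom.id d) (handlerCoactL me t ψ)))).comp
            (assocInv s d (polyComp d (polyComp t e))) := rfl
    rw [e1, e2, coassoc1]
  obtain ⟨l, hl, -⟩ := W.lift _ _ hk
  exact ⟨l, hl⟩
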